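/- For the figure-eight knot surgery manifold Y = S^3_{+3}(4_1) = M(-1; 1/3, 1/3, 1/4), with Ẑ_0 = q^{-1/48}(Ψ_{12,1}(q) - Ψ_{12,7}(q)) and Ẑ_1 = -q^{-1/48}Ψ_{12,9}(q), the combination with the p=3 Witt coefficients at q = e^{2πi/6} evaluates to τ_6[Y,0] = -i√3, where Ψ_{m,r}(e^{2πi/k}) = Σ_{n=1}^{2mk}(1/2 - n/(2mk))ψ^{(r)}_{2m}(n)e^{iπn²/(2mk)} with ψ^{(r)}_{2m}(n) = ±1 for n ≡ ±r mod 2m and 0 otherwise. -/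

import Mathlib

open Complex Finset

/-- The Eichler integral of the weight 3/2 false theta function at the k-th root of
unity: `Ψ_{m,r}(e^{2πi/k}) = ∑_{n=1}^{2mk} (1/2 - n/(2mk)) ψ^{(r)}_{2m}(n) e^{iπn²/(2mk)}`,
where `ψ^{(r)}_{2m}(n) = ±1` for `n ≡ ±r (mod 2m)` and `0` otherwise. -/
noncomputable def PsiFT (m r k : ℕ) : ℂ :=
  ∑ n ∈ Finset.Icc 1 (2 * m * k),
    ((1 : ℂ) / 2 - (n : ℂ) / (2 * m * k)) *
      (if n % (2 * m) = r % (2 * m) then 1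
        else if (n + r) % (2 * m) = 0 then -1 else 0) *
      Complex.exp (Real.pi * I * (n : ℂ) ^ 2 / (2 * m * k))

/-- The odd Witt coefficients for `p = 3`:
`c^{Witt}_t = (e^{-iπ/4}/(4√3)) ∑_{r=0}^{5} e^{-(iπ/36)(6r-2t+3)²}`. -/
noncomputable def cWittP3 (t : ℕ) : ℂ :=
  (Complex.exp (-(Real.pi * I) / 4) / (4 * Real.sqrt 3)) *
    ∑ r ∈ range 6,
      Complex.exp (-(Real.pi * I / 36) * (6 * (r : ℂ) - 2 * (t : ℂ) + 3) ^ 2)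

/-! Write `n = 2m j + s` with `0 ≤ s < 2m`, `0 ≤ j < k`. When `k ∣ m`, the phase
`e^{πin²/(2mk)}` splits as `e^{πis²/(2mk)} η^{sj}` with `η = e^{2πi/k}`, while the weight
`1/2 - n/(2mk)` is affine in `j`; since `∑_{j<k} j x^j = k/(x - 1)` for `x^k = 1 ≠ x`, the sum
over `j` collapses to `e^{πis²/(2mk)}/(1 - η^s)`. Only `s = r` and `s = 2m - r` survive, giving
`Ψ_{m,r}(e^{2πi/k}) = 2e^{πir²/(2mk)}/(1 - η^r)` for `0 < r < m`, `k ∣ m`, `k ∤ r`.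
For `m = 12`, `k = 6` this yields `q^{-1/48}(Ψ_{12,1} - Ψ_{12,7}) = 2`. The Witt coefficient `c_1`
vanishes because its terms are `e^{-iπ/36}` times two full periods of a cube root of unity,
and every term of `c_0` equals `e^{-iπ/4}`, so `c_0 = 6e^{-iπ/2}/(4√3) = -i√3/2`. -/

theorem Finset.sum_range_mul_eq_sum_sum {M : Type*} [AddCommMonoid M] (f : ℕ → M) (a b : ℕ) :
    ∑ n ∈ range (a * b), f n = ∑ j ∈ range b, ∑ s ∈ range a, f (a * j + s) := by
  induction b with
  | zero => simp
  | succ b ih => rw [Nat.mul_succ, sum_range_add, ih, sum_range_succ]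

theorem Finset.sum_Icc_one_eq_sum_range {M : Type*} [AddCancelCommMonoid M] {f : ℕ → M}
    {N : ℕ} (hf : f N = f 0) : ∑ n ∈ Icc 1 N, f n = ∑ n ∈ range N, f n := by
  have h := (sum_range_eq_add_Ico f (Nat.add_one_pos N)).symm.trans (sum_range_succ f N)
  rwa [Ico_add_one_right_eq_Icc, hf, add_comm, add_left_inj] at h

theorem sum_range_natCast_mul_pow_of_pow_eq_one {K : Type*} [Field K] {x : K} {n : ℕ}
    (hxn : x ^ n = 1) (hx : x ≠ 1) : ∑ j ∈ range n, (j : K) * x ^ j = n / (x - 1) := by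
  have key : ∀ N : ℕ, (x - 1) ^ 2 * ∑ j ∈ range N, (j : K) * x ^ j
      = (N - 1) * x ^ (N + 1) - N * x ^ N + x := by
    intro N
    induction N with
    | zero => simp
    | succ N ih => rw [sum_range_succ, mul_add, ih]; push_cast; ring
  have hx' : x - 1 ≠ 0 := sub_ne_zero.mpr hx
  rw [eq_div_iff hx', ← mul_right_inj' hx']
  linear_combination key n + (n * x - n - x) * hxn

def falseThetaCoeff (m r n : ℕ) : ℂ :=
  if n % (2 * m) = r % (2 * m) then 1 else if (n + r) % (2 * m) = 0 then -1 else 0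

theorem falseThetaCoeff_mul_add (m r j s : ℕ) :
    falseThetaCoeff m r (2 * m * j + s) = falseThetaCoeff m r s := by
  simp only [falseThetaCoeff, Nat.mul_add_mod, add_assoc]

theorem falseThetaCoeff_zero {m r : ℕ} (hr : 0 < r) (hrm : r < m) :
    falseThetaCoeff m r 0 = 0 := by
  have hr' : r % (2 * m) = r := Nat.mod_eq_of_lt (by omega)
  simp only [falseThetaCoeff, Nat.zero_mod, zero_add, hr']
  rw [if_neg (by omega), if_neg (by omega)]

theorem sum_range_falseThetaCoeff_mul {m r : ℕ} (hr : 0 < r) (hrm : r < m) (g : ℕ → ℂ) :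
    ∑ s ∈ range (2 * m), falseThetaCoeff m r s * g s = g r - g (2 * m - r) := by
  have hr' : r % (2 * m) = r := Nat.mod_eq_of_lt (by omega)
  rw [sum_eq_add_of_mem r (2 * m - r) (by simp; omega) (by simp; omega) (by omega)]
  · have hneg : falseThetaCoeff m r (2 * m - r) = -1 := by
      rw [falseThetaCoeff, Nat.mod_eq_of_lt (by omega : 2 * m - r < 2 * m), hr',
        Nat.sub_add_cancel (by omega), Nat.mod_self, if_neg (by omega), if_pos rfl]
    have hpos : falseThetaCoeff m r r = 1 := if_pos rfl
    rw [hpos, hneg]; ring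
  · intro s hs ⟨hsr, hsr'⟩
    have hs : s < 2 * m := mem_range.mp hs
    have hsum : (s + r) % (2 * m) ≠ 0 := by
      by_cases h : s + r < 2 * m
      · rw [Nat.mod_eq_of_lt h]; omega
      · rw [Nat.mod_eq_sub_mod (by omega), Nat.mod_eq_of_lt (by omega)]; omega
    simp [falseThetaCoeff, Nat.mod_eq_of_lt hs, hr', hsr, hsum]

noncomputable def eichlerTerm (m k n : ℕ) : ℂ :=
  ((1 : ℂ) / 2 - n / (2 * m * k)) * Complex.exp (Real.pi * I * (n : ℂ) ^ 2 / (2 * m * k))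

theorem PsiFT_eq_sum_falseThetaCoeff_mul {m r : ℕ} (k : ℕ) (hr : 0 < r) (hrm : r < m) :
    PsiFT m r k = ∑ s ∈ range (2 * m), falseThetaCoeff m r s *
      ∑ j ∈ range k, eichlerTerm m k (2 * m * j + s) := by
  have hPsi : PsiFT m r k =
      ∑ n ∈ Icc 1 (2 * m * k), falseThetaCoeff m r n * eichlerTerm m k n := by
    refine sum_congr rfl fun n _ ↦ ?_
    rw [falseThetaCoeff, eichlerTerm]
    ring
  have h0 := falseThetaCoeff_zero hr hrm
  have hN : falseThetaCoeff m r (2 * m * k) = 0 := by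
    simpa [h0] using falseThetaCoeff_mul_add m r k 0
  rw [hPsi, sum_Icc_one_eq_sum_range (by rw [hN, h0, zero_mul, zero_mul]),
    sum_range_mul_eq_sum_sum, sum_comm]
  simp only [falseThetaCoeff_mul_add, mul_sum]

theorem exp_pi_I_mul_add_sq_div {m k : ℕ} (hm : m ≠ 0) (hkm : k ∣ m) (j s : ℕ) :
    Complex.exp (Real.pi * I * (2 * m * j + s : ℂ) ^ 2 / (2 * m * k)) =
      Complex.exp (Real.pi * I * (s : ℂ) ^ 2 / (2 * m * k)) *
        Complex.exp (2 * Real.pi * I / k) ^ (s * j) := by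
  obtain ⟨l, rfl⟩ := hkm
  have hk : (k : ℂ) ≠ 0 := by exact_mod_cast left_ne_zero_of_mul hm
  have hl : (l : ℂ) ≠ 0 := by exact_mod_cast right_ne_zero_of_mul hm
  rw [← Complex.exp_nat_mul, ← Complex.exp_add, Complex.exp_eq_exp_iff_exists_int]
  refine ⟨l * j ^ 2, ?_⟩
  push_cast
  field_simp
  ring

theorem sum_range_eichlerTerm_mul_add {m k s : ℕ} (hm : m ≠ 0) (hkm : k ∣ m) (hks : ¬ k ∣ s) :
    ∑ j ∈ range k, eichlerTerm m k (2 * m * j + s) =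
      Complex.exp (Real.pi * I * (s : ℂ) ^ 2 / (2 * m * k)) /
        (1 - Complex.exp (2 * Real.pi * I / k) ^ s) := by
  have hk0 : k ≠ 0 := by rintro rfl; exact hm (zero_dvd_iff.mp hkm)
  have hη := Complex.isPrimitiveRoot_exp k hk0
  set x := Complex.exp (2 * Real.pi * I / k) ^ s
  have hxk : x ^ k = 1 := by rw [pow_right_comm, hη.pow_eq_one, one_pow]
  have hx1 : x ≠ 1 := fun h ↦ hks (hη.pow_eq_one_iff_dvd s |>.mp h)
  have hgeom : ∑ j ∈ range k, x ^ j = 0 := by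
    rw [geom_sum_eq hx1, hxk, sub_self, zero_div]
  have hid := sum_range_natCast_mul_pow_of_pow_eq_one hxk hx1
  have hm' : (m : ℂ) ≠ 0 := Nat.cast_ne_zero.mpr hm
  have hk' : (k : ℂ) ≠ 0 := Nat.cast_ne_zero.mpr hk0
  have hx1' : 1 - x ≠ 0 := sub_ne_zero.mpr hx1.symm
  simp_rw [eichlerTerm, Nat.cast_add, Nat.cast_mul, Nat.cast_ofNat,
    exp_pi_I_mul_add_sq_div hm hkm, pow_mul]
  calc _ = Complex.exp (Real.pi * I * (s : ℂ) ^ 2 / (2 * m * k)) *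
        (((1 : ℂ) / 2 - s / (2 * m * k)) * ∑ j ∈ range k, x ^ j
          - 1 / k * ∑ j ∈ range k, (j : ℂ) * x ^ j) := by
        rw [mul_sum, mul_sum, ← sum_sub_distrib, mul_sum]
        refine sum_congr rfl fun j _ ↦ ?_
        field_simp
        ring
    _ = _ := by
        rw [hgeom, hid]
        field_simp
        ring

theorem PsiFT_eq_two_mul_exp_div {m r k : ℕ} (hr : 0 < r) (hrm : r < m) (hkm : k ∣ m)
    (hkr : ¬ k ∣ r) :
    PsiFT m r k = 2 * Complex.exp (Real.pi * I * (r : ℂ) ^ 2 / (2 * m * k)) /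
      (1 - Complex.exp (2 * Real.pi * I / k) ^ r) := by
  have hm : m ≠ 0 := by omega
  have hk0 : k ≠ 0 := by rintro rfl; exact hm (zero_dvd_iff.mp hkm)
  have hη := Complex.isPrimitiveRoot_exp k hk0
  have hk2m : k ∣ 2 * m := hkm.mul_left 2
  have hkr' : ¬ k ∣ 2 * m - r := fun h ↦ hkr <| by
    simpa [Nat.sub_sub_self (by omega : r ≤ 2 * m)] using Nat.dvd_sub hk2m h
  rw [PsiFT_eq_sum_falseThetaCoeff_mul k hr hrm, sum_range_falseThetaCoeff_mul hr hrm,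
    sum_range_eichlerTerm_mul_add hm hkm hkr, sum_range_eichlerTerm_mul_add hm hkm hkr']
  set η := Complex.exp (2 * Real.pi * I / k)
  set E := Complex.exp (Real.pi * I * (r : ℂ) ^ 2 / (2 * m * k))
  have hexp : Complex.exp (Real.pi * I * ((2 * m - r : ℕ) : ℂ) ^ 2 / (2 * m * k)) =
      E * η ^ (2 * m - r) := by
    obtain ⟨l, rfl⟩ := hkm
    rw [← Complex.exp_nat_mul, ← Complex.exp_add, Complex.exp_eq_exp_iff_exists_int]
    refine ⟨-l, ?_⟩
    have hk : (k : ℂ) ≠ 0 := Nat.cast_ne_zero.mpr hk0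
    have hl : (l : ℂ) ≠ 0 := by exact_mod_cast right_ne_zero_of_mul hm
    rw [Nat.cast_sub (by omega)]
    push_cast
    field_simp
    ring
  have hinv : η ^ (2 * m - r) * η ^ r = 1 := by
    rw [← pow_add, Nat.sub_add_cancel (by omega)]
    exact (hη.pow_eq_one_iff_dvd _).mpr hk2m
  have hx1 : 1 - η ^ r ≠ 0 := sub_ne_zero.mpr fun h ↦ hkr (hη.pow_eq_one_iff_dvd r |>.mp h.symm)
  have hy1 : 1 - η ^ (2 * m - r) ≠ 0 := sub_ne_zero.mpr fun h ↦
    hkr' (hη.pow_eq_one_iff_dvd _ |>.mp h.symm)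
  rw [hexp]
  field_simp
  linear_combination E * hinv

theorem exp_neg_pi_I_mul_PsiFT_sub :
    Complex.exp (-(Real.pi * I) / 144) * (PsiFT 12 1 6 - PsiFT 12 7 6) = 2 := by
  have hω := Complex.isPrimitiveRoot_exp 6 (by norm_num)
  rw [PsiFT_eq_two_mul_exp_div (by norm_num) (by norm_num) (by norm_num) (by norm_num),
    PsiFT_eq_two_mul_exp_div (by norm_num) (by norm_num) (by norm_num) (by norm_num)]
  set ω := Complex.exp (2 * Real.pi * I / (6 : ℕ))
  set ζ := Complex.exp (Real.pi * I * ((1 : ℕ) : ℂ) ^ 2 / (2 * (12 : ℕ) * (6 : ℕ)))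
  set c := Complex.exp (-(Real.pi * I) / 144)
  have h49 : Complex.exp (Real.pi * I * ((7 : ℕ) : ℂ) ^ 2 / (2 * (12 : ℕ) * (6 : ℕ))) = ζ * ω := by
    rw [← Complex.exp_add]
    congr 1
    push_cast
    ring
  have h7 : ω ^ 7 = ω := by rw [pow_succ, hω.pow_eq_one, one_mul]
  have hζ : c * ζ = 1 := by
    rw [← Complex.exp_add, ← Complex.exp_zero]
    congr 1
    push_cast
    ring
  have hω1 : 1 - ω ≠ 0 := sub_ne_zero.mpr (hω.ne_one (by norm_num)).symm
  rw [h49, h7, pow_one]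
  field_simp
  linear_combination hζ

theorem cWittP3_one : cWittP3 1 = 0 := by
  have hρ := Complex.isPrimitiveRoot_exp 3 (by norm_num)
  set ρ := Complex.exp (2 * Real.pi * I / (3 : ℕ))
  have hterm (r : ℕ) : Complex.exp (-(Real.pi * I / 36) * (6 * (r : ℂ) - 2 * ((1 : ℕ) : ℂ) + 3) ^ 2)
      = Complex.exp (-(Real.pi * I / 36)) * ρ ^ r := by
    obtain ⟨q, hq⟩ := Nat.even_mul_succ_self r
    rw [← Complex.exp_nat_mul, ← Complex.exp_add, Complex.exp_eq_exp_iff_exists_int]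
    refine ⟨-q, ?_⟩
    have hq' : (r : ℂ) * (r + 1) = q + q := by exact_mod_cast hq
    push_cast
    linear_combination (-(Real.pi * I)) * hq'
  have hgeom : ∑ r ∈ range 6, ρ ^ r = 0 := by
    have hρ6 : ρ ^ 6 = 1 := by rw [show 6 = 3 * 2 by rfl, pow_mul, hρ.pow_eq_one, one_pow]
    rw [geom_sum_eq (hρ.ne_one (by norm_num)), hρ6, sub_self, zero_div]
  rw [cWittP3, sum_congr rfl fun r _ ↦ hterm r, ← mul_sum, hgeom, mul_zero, mul_zero]

theorem cWittP3_zero : cWittP3 0 = -(I * Real.sqrt 3) / 2 := by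
  rw [cWittP3]
  set e := Complex.exp (-(Real.pi * I) / 4)
  have hterm (r : ℕ) : Complex.exp (-(Real.pi * I / 36) * (6 * (r : ℂ) - 2 * ((0 : ℕ) : ℂ) + 3) ^ 2)
      = e := by
    obtain ⟨q, hq⟩ := Nat.even_mul_succ_self r
    rw [Complex.exp_eq_exp_iff_exists_int]
    refine ⟨-q, ?_⟩
    have hq' : (r : ℂ) * (r + 1) = q + q := by exact_mod_cast hq
    push_cast
    linear_combination (-(Real.pi * I)) * hq'
  have hsq : e ^ 2 = -I := by
    rw [← Complex.exp_nat_mul, ← Complex.exp_neg_pi_div_two_mul_I]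
    congr 1
    push_cast
    ring
  have hs : (Real.sqrt 3 : ℂ) ^ 2 = 3 := by
    rw [← Complex.ofReal_pow, Real.sq_sqrt (by norm_num)]
    norm_num
  have hs0 : (Real.sqrt 3 : ℂ) ≠ 0 := by
    exact_mod_cast (Real.sqrt_pos.mpr (by norm_num : (0 : ℝ) < 3)).ne'
  rw [sum_congr rfl fun r _ ↦ hterm r, sum_const, card_range]
  field_simp
  linear_combination 12 * hsq + 4 * I * hs

/-- For `Y = S³₊₃(4₁) = M(-1; 1/3, 1/3, 1/4)`, with `Ẑ₀ = q^{-1/48}(Ψ_{12,1} - Ψ_{12,7})`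
and `Ẑ₁ = -q^{-1/48} Ψ_{12,9}` evaluated at `q = e^{2πi/6}` (so
`q^{-1/48} = e^{-πi/144}`), the combination with the `p = 3` Witt coefficients gives
`τ₆[Y, 0] = -i√3`. -/
theorem tau6_S3_plus3_fig8 :
    cWittP3 0 * (Complex.exp (-(Real.pi * I) / 144) * (PsiFT 12 1 6 - PsiFT 12 7 6)) +
      cWittP3 1 * (-(Complex.exp (-(Real.pi * I) / 144)) * PsiFT 12 9 6)
    = -(I * Real.sqrt 3) := by
  rw [cWittP3_one, zero_mul, add_zero, exp_neg_pi_I_mul_PsiFT_sub, cWittP3_zero]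
  ring
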